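/- Let q be a complex number with 0 < |q| < 1. Define the sequence α by α_0 = 1/(1−q), and for n ≥ 1: α_{3n−1} = 0, and for n ≥ 1: α_{3n} = (q^{6n²+n} − q^{6n²+7n+2})/((1−q)(1−q²)), and for n ≥ 0: α_{3n+1} = (−q^{6n²+5n+1} + q^{6n²+11n+5})/((1−q)(1−q²)). Then for every integer n ≥ 0, 1/(q;q)_{2n+1} = ∑_{i=0}^n α_i / ((q;q)_{n−i} (q^3;q)_{n+i}); that is, (α_n, 1/(q;q)_{2n+1}) is a Bailey pair relative to (q^2;q). -/

import Mathlib

open scoped BigOperators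

/-- Finite q-Pochhammer symbol $(a;q)_n = \prod_{k=0}^{n-1}(1-aq^k)$. -/
noncomputable def qPoch (a q : ℂ) (n : ℕ) : ℂ := ∏ k ∈ Finset.range n, (1 - a * q ^ k)

/-- Infinite q-Pochhammer symbol $(a;q)_\infty = \prod_{k=0}^{\infty}(1-aq^k)$. -/
noncomputable def qPochInf (a q : ℂ) : ℂ := ∏' k : ℕ, (1 - a * q ^ k)

/-- Jacobi theta function $j(z;q) = (z;q)_\infty (q/z;q)_\infty (q;q)_\infty$. -/
noncomputable def jt (z q : ℂ) : ℂ := qPochInf z q * qPochInf (q / z) q * qPochInf q q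

/-- $J_{a,m} = j(q^a;q^m)$. -/
noncomputable def Jq (q : ℂ) (a m : ℕ) : ℂ := jt (q ^ a) (q ^ m)

/-- $\bar J_{a,m} = j(-q^a;q^m)$. -/
noncomputable def Jbq (q : ℂ) (a m : ℕ) : ℂ := jt (-q ^ a) (q ^ m)

/-- $J_m = (q^m;q^m)_\infty$. -/
noncomputable def Jmq (q : ℂ) (m : ℕ) : ℂ := qPochInf (q ^ m) (q ^ m)

/-- sign function: 1 for r ≥ 0, -1 for r < 0. -/
noncomputable def sg (r : ℤ) : ℂ := if 0 ≤ r then 1 else -1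

/-- Hecke-type series
$f_{a,b,c}(x,y,q) = \sum_{sg(r)=sg(s)} sg(r)(-1)^{r+s} x^r y^s q^{a\binom r2 + brs + c\binom s2}$. -/
noncomputable def hecke (a b c : ℤ) (x y q : ℂ) : ℂ :=
  ∑' p : ℤ × ℤ,
    if (0 ≤ p.1 ↔ 0 ≤ p.2) then
      sg p.1 * (-1 : ℂ) ^ (p.1 + p.2) * x ^ p.1 * y ^ p.2 *
        q ^ (a * (p.1 * (p.1 - 1) / 2) + b * p.1 * p.2 + c * (p.2 * (p.2 - 1) / 2))
    else 0

/-- Appell–Lerch sum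
$m(x,q,z) = \frac{1}{j(z;q)} \sum_{r\in\mathbb Z} \frac{(-1)^r q^{\binom r2} z^r}{1-q^{r-1}xz}$. -/
noncomputable def appell (x q z : ℂ) : ℂ :=
  (1 / jt z q) *
    ∑' r : ℤ, (-1 : ℂ) ^ r * q ^ (r * (r - 1) / 2) * z ^ r / (1 - q ^ (r - 1) * x * z)


/-!
Call `β n` the right-hand side. The sequence `1 / (q;q)_{2n+1}` is determined by its value
`1 / (1 - q)` at `0` and the recurrence `(1 - q^(2n+2)) (1 - q^(2n+3)) b (n+1) = b n`, so it
suffices that `β` satisfies the recurrence. Over the denominators of `β (n+1)`, the difference of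
its two sides is a sum of `n + 2` terms whose partial sums over the first `3t` terms have a closed
form (a WZ-type certificate); the at most four remaining terms cancel it.
-/

open Finset

@[simp]
theorem qPoch_zero (a q : ℂ) : qPoch a q 0 = 1 :=
  prod_range_zero _

theorem qPoch_succ (a q : ℂ) (n : ℕ) : qPoch a q (n + 1) = qPoch a q n * (1 - a * q ^ n) :=
  prod_range_succ _ _

theorem qPoch_self_succ (q : ℂ) (n : ℕ) :
    qPoch q q (n + 1) = qPoch q q n * (1 - q ^ (n + 1)) := by
  rw [qPoch_succ, pow_succ']

theorem qPoch_self_add_two (q : ℂ) (n : ℕ) :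
    qPoch q q (n + 2) = (1 - q) * (1 - q ^ 2) * qPoch (q ^ 3) q n := by
  induction n with
  | zero => simp [qPoch, prod_range_succ, pow_succ]
  | succ n ih =>
    rw [show n + 1 + 2 = n + 2 + 1 by ring, qPoch_self_succ, ih, qPoch_succ]
    ring

theorem one_sub_ne_zero_of_norm_lt_one {x : ℂ} (hx : ‖x‖ < 1) : 1 - x ≠ 0 := by
  rw [sub_ne_zero]
  rintro rfl
  exact (norm_one (α := ℂ)).not_lt hx

theorem norm_mul_pow_lt_one {a q : ℂ} (ha : ‖a‖ < 1) (hq : ‖q‖ ≤ 1) (k : ℕ) :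
    ‖a * q ^ k‖ < 1 := by
  rw [norm_mul, norm_pow]
  exact mul_lt_one_of_nonneg_of_lt_one_left (norm_nonneg a) ha
    (pow_le_one₀ (norm_nonneg q) hq)

theorem one_sub_pow_succ_ne_zero {q : ℂ} (hq : ‖q‖ < 1) (k : ℕ) : 1 - q ^ (k + 1) ≠ 0 := by
  rw [pow_succ']
  exact one_sub_ne_zero_of_norm_lt_one (norm_mul_pow_lt_one hq hq.le k)

theorem qPoch_ne_zero {a q : ℂ} (ha : ‖a‖ < 1) (hq : ‖q‖ ≤ 1) (n : ℕ) : qPoch a q n ≠ 0 :=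
  prod_ne_zero_iff.2 fun k _ => one_sub_ne_zero_of_norm_lt_one (norm_mul_pow_lt_one ha hq k)

theorem qPoch_pow_three_eq_div {q : ℂ} (hq : ‖q‖ < 1) (n : ℕ) :
    qPoch (q ^ 3) q n = qPoch q q (n + 2) / ((1 - q) * (1 - q ^ 2)) := by
  rw [qPoch_self_add_two, mul_div_cancel_left₀]
  exact mul_ne_zero (by simpa using one_sub_pow_succ_ne_zero hq 0)
    (one_sub_pow_succ_ne_zero hq 1)

theorem eq_one_div_qPoch_of_recurrence {q : ℂ} (hq : ‖q‖ < 1) {β : ℕ → ℂ}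
    (h0 : β 0 = 1 / (1 - q))
    (hsucc : ∀ n, (1 - q ^ (2 * n + 2)) * (1 - q ^ (2 * n + 3)) * β (n + 1) = β n) (n : ℕ) :
    β n = 1 / qPoch q q (2 * n + 1) := by
  induction n with
  | zero => simp [h0, qPoch]
  | succ n ih =>
    rw [← hsucc] at ih
    rw [show 2 * (n + 1) + 1 = 2 * n + 1 + 1 + 1 by ring, qPoch_self_succ, qPoch_self_succ]
    field_simp [one_sub_pow_succ_ne_zero hq, qPoch_ne_zero hq hq.le] at ih ⊢
    linear_combination ih

-- `b` stands for `a * q`: the `β` of a Bailey pair relative to `(a; q)`.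
noncomputable def baileyBeta (b q : ℂ) (α : ℕ → ℂ) (n : ℕ) : ℂ :=
  ∑ i ∈ range (n + 1), α i / (qPoch q q (n - i) * qPoch b q (n + i))

theorem baileyBeta_eq_sum_range_succ {b q : ℂ} (hb : ‖b‖ < 1) (hq : ‖q‖ < 1) (α : ℕ → ℂ)
    (n : ℕ) :
    baileyBeta b q α n = ∑ i ∈ range (n + 2),
      α i * ((1 - q ^ (n + 1 - i)) * (1 - b * q ^ (n + i))) /
        (qPoch q q (n + 1 - i) * qPoch b q (n + 1 + i)) := by
  rw [sum_range_succ, Nat.sub_self, pow_zero, sub_self, zero_mul, mul_zero, zero_div, add_zero]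
  refine sum_congr rfl fun i hi => ?_
  have hi : i ≤ n := Nat.lt_succ_iff.1 (mem_range.1 hi)
  rw [show n + 1 - i = n - i + 1 by omega, show n + 1 + i = n + i + 1 by ring, qPoch_self_succ,
    qPoch_succ, mul_mul_mul_comm, mul_div_mul_right]
  exact mul_ne_zero (one_sub_pow_succ_ne_zero hq _)
    (one_sub_ne_zero_of_norm_lt_one (norm_mul_pow_lt_one hb hq.le _))

noncomputable def recurrenceTerm (q : ℂ) (α : ℕ → ℂ) (n i : ℕ) : ℂ :=
  α i * ((1 - q ^ (2 * n + 2)) * (1 - q ^ (2 * n + 3)) -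
      (1 - q ^ (n + 1 - i)) * (1 - q ^ 3 * q ^ (n + i))) /
    (qPoch q q (n + 1 - i) * qPoch (q ^ 3) q (n + 1 + i))

theorem sum_recurrenceTerm {q : ℂ} (hq : ‖q‖ < 1) (α : ℕ → ℂ) (n : ℕ) :
    ∑ i ∈ range (n + 2), recurrenceTerm q α n i =
      (1 - q ^ (2 * n + 2)) * (1 - q ^ (2 * n + 3)) * baileyBeta (q ^ 3) q α (n + 1) -
        baileyBeta (q ^ 3) q α n := by
  have hq3 : ‖q ^ 3‖ < 1 := by
    simpa [← pow_succ'] using norm_mul_pow_lt_one hq hq.le 2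
  rw [baileyBeta_eq_sum_range_succ hq3 hq α n, baileyBeta, mul_sum, ← sum_sub_distrib]
  refine sum_congr rfl fun i _ => ?_
  rw [recurrenceTerm]
  ring

section Certificate

variable {q : ℂ} (hq : ‖q‖ < 1) {α : ℕ → ℂ}
  (h₀ : ∀ k, α (3 * k) =
    (q ^ (6 * k ^ 2 + k) - q ^ (6 * k ^ 2 + 7 * k + 2)) / ((1 - q) * (1 - q ^ 2)))
  (h₁ : ∀ k, α (3 * k + 1) =
    (-q ^ (6 * k ^ 2 + 5 * k + 1) + q ^ (6 * k ^ 2 + 11 * k + 5)) / ((1 - q) * (1 - q ^ 2)))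
  (h₂ : ∀ k, α (3 * k + 2) = 0)
include hq h₀ h₁ h₂

-- The induction adds one period `3t, 3t + 1, 3t + 2` of `α` at a time.
theorem sum_range_three_mul_recurrenceTerm (t s : ℕ) :
    ∑ i ∈ range (3 * t), recurrenceTerm q α (3 * t + s) i =
      -q ^ (6 * t ^ 2 + t + s + 1) *
          (1 - q ^ (4 * t) + q ^ (4 * t + s + 1) - q ^ (6 * t + s + 1)) /
        (qPoch q q (s + 1) * qPoch q q (6 * t + s + 1)) := by
  have hf := one_sub_pow_succ_ne_zero hq
  have hP := qPoch_ne_zero hq hq.le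
  have h1 : 1 - q ≠ 0 := by simpa using hf 0
  induction t generalizing s with
  | zero => simp
  | succ t ih =>
    rw [show 3 * (t + 1) = 3 * t + 2 + 1 by ring, sum_range_succ, sum_range_succ, sum_range_succ,
      show 3 * t + 2 + 1 + s = 3 * t + (s + 3) by ring, ih]
    simp only [recurrenceTerm, h₀, h₁, h₂,
      show 3 * t + (s + 3) + 1 - 3 * t = s + 3 + 1 by omega,
      show 3 * t + (s + 3) + 1 - (3 * t + 1) = s + 2 + 1 by omega,
      show 3 * t + (s + 3) + 1 + 3 * t = 6 * t + s + 4 by omega,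
      show 3 * t + (s + 3) + 1 + (3 * t + 1) = 6 * t + s + 5 by omega, qPoch_pow_three_eq_div hq,
      show 6 * (t + 1) + s + 1 = 6 * t + s + 6 + 1 by ring,
      show 6 * t + (s + 3) + 1 = 6 * t + s + 3 + 1 by ring,
      qPoch_self_succ, zero_mul, zero_div, add_zero]
    field_simp [hf, hP, h1]
    ring

theorem sum_recurrenceTerm_eq_zero (n : ℕ) :
    ∑ i ∈ range (n + 2), recurrenceTerm q α n i = 0 := by
  have hf := one_sub_pow_succ_ne_zero hq
  have hP := qPoch_ne_zero hq hq.le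
  have h1 : 1 - q ≠ 0 := by simpa using hf 0
  have H := sum_range_three_mul_recurrenceTerm hq h₀ h₁ h₂
  obtain ⟨t, rfl | rfl | rfl⟩ : ∃ t, n = 3 * t ∨ n = 3 * t + 1 ∨ n = 3 * t + 2 :=
    ⟨n / 3, by omega⟩
  · have H0 := H t 0
    rw [add_zero] at H0
    simp only [sum_range_succ]
    rw [H0]
    simp only [recurrenceTerm, h₀, h₁, add_tsub_cancel_left, Nat.sub_self,
      show 3 * t + 1 + 3 * t = 6 * t + 1 by ring, show 3 * t + 1 + (3 * t + 1) = 6 * t + 2 by ring,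
      qPoch_pow_three_eq_div hq, qPoch_self_succ, qPoch_zero]
    field_simp [hf, hP, h1]
    ring
  · simp only [sum_range_succ]
    rw [H t 1]
    simp only [recurrenceTerm, h₀, h₁, h₂, Nat.sub_self,
      show 3 * t + 1 + 1 - 3 * t = 2 by omega, show 3 * t + 1 + 1 - (3 * t + 1) = 1 by omega,
      show 3 * t + 1 + 1 + 3 * t = 6 * t + 2 by ring,
      show 3 * t + 1 + 1 + (3 * t + 1) = 6 * t + 3 by ring,
      qPoch_pow_three_eq_div hq, qPoch_self_succ, qPoch_zero, zero_mul, zero_div, add_zero]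
    field_simp [hf, hP, h1]
    ring
  · have h₃ : α (3 * t + 2 + 1) = _ := mul_add_one 3 t ▸ h₀ (t + 1)
    simp only [sum_range_succ]
    rw [H t 2]
    simp only [recurrenceTerm, h₀, h₁, h₂, h₃, Nat.sub_self,
      show 3 * t + 2 + 1 - 3 * t = 3 by omega, show 3 * t + 2 + 1 - (3 * t + 1) = 2 by omega,
      show 3 * t + 2 + 1 + 3 * t = 6 * t + 3 by ring,
      show 3 * t + 2 + 1 + (3 * t + 1) = 6 * t + 4 by ring,
      show 3 * t + 2 + 1 + (3 * t + 2 + 1) = 6 * t + 6 by ring,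
      qPoch_pow_three_eq_div hq, qPoch_self_succ, qPoch_zero, zero_mul, zero_div, add_zero]
    field_simp [hf, hP, h1]
    ring

end Certificate

theorem stmt4_general (q : ℂ) (hq1 : ‖q‖ < 1)
    (α : ℕ → ℂ) (hα0 : α 0 = 1 / (1 - q))
    (hα1 : ∀ n : ℕ, 1 ≤ n → α (3 * n - 1) = 0)
    (hα2 : ∀ n : ℕ, 1 ≤ n →
      α (3 * n) = (q ^ (6 * n ^ 2 + n) - q ^ (6 * n ^ 2 + 7 * n + 2)) / ((1 - q) * (1 - q ^ 2)))
    (hα3 : ∀ n : ℕ,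
      α (3 * n + 1) =
        (-q ^ (6 * n ^ 2 + 5 * n + 1) + q ^ (6 * n ^ 2 + 11 * n + 5)) / ((1 - q) * (1 - q ^ 2))) :
    ∀ n : ℕ, 1 / qPoch q q (2 * n + 1) =
      ∑ i ∈ Finset.range (n + 1), α i / (qPoch q q (n - i) * qPoch (q ^ 3) q (n + i)) := by
  have h₀ (k : ℕ) : α (3 * k) =
      (q ^ (6 * k ^ 2 + k) - q ^ (6 * k ^ 2 + 7 * k + 2)) / ((1 - q) * (1 - q ^ 2)) := by
    rcases k with _ | k
    · have h2 := one_sub_pow_succ_ne_zero hq1 1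
      rw [mul_zero, hα0]
      field_simp
      ring
    · exact hα2 (k + 1) k.succ_pos
  have h₂ (k : ℕ) : α (3 * k + 2) = 0 := by simpa [mul_add_one] using hα1 (k + 1) k.succ_pos
  refine fun n => (eq_one_div_qPoch_of_recurrence hq1 (β := baileyBeta (q ^ 3) q α) ?_
    (fun m => ?_) n).symm
  · simp [baileyBeta, hα0]
  · rw [← sub_eq_zero, ← sum_recurrenceTerm hq1, sum_recurrenceTerm_eq_zero hq1 h₀ hα3 h₂]

theorem stmt4 (q : ℂ) (hq0 : 0 < ‖q‖) (hq1 : ‖q‖ < 1)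
    (α : ℕ → ℂ) (hα0 : α 0 = 1 / (1 - q))
    (hα1 : ∀ n : ℕ, 1 ≤ n → α (3 * n - 1) = 0)
    (hα2 : ∀ n : ℕ, 1 ≤ n →
      α (3 * n) = (q ^ (6 * n ^ 2 + n) - q ^ (6 * n ^ 2 + 7 * n + 2)) / ((1 - q) * (1 - q ^ 2)))
    (hα3 : ∀ n : ℕ,
      α (3 * n + 1) =
        (-q ^ (6 * n ^ 2 + 5 * n + 1) + q ^ (6 * n ^ 2 + 11 * n + 5)) / ((1 - q) * (1 - q ^ 2))) :
    ∀ n : ℕ, 1 / qPoch q q (2 * n + 1) =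
      ∑ i ∈ Finset.range (n + 1), α i / (qPoch q q (n - i) * qPoch (q ^ 3) q (n + i)) :=
  stmt4_general q hq1 α hα0 hα1 hα2 hα3
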